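/- arXiv:1604.00813 — 7 statements merged into one kernel-verified Lean document; each statement's English description precedes it below -/
import Mathlib

section
/- Let ρ be a density matrix on a finite-dimensional Hilbert space and A an observable (Hermitian operator) with Tr(ρA) = 0. If there exist constants c₁ > 0 and c₂ ≥ 0 such that log Tr(e^{τA} ρ) ≤ c₁τ² + c₂ for all τ ≥ 0, then for every x ≥ 0, Tr(Π_{≥x}^A ρ) ≤ exp(−x²/(4c₁) + c₂), where Π_{≥x}^A is the spectral projection of A onto eigenvalues ≥ x. -/
open Matrix
open scoped ComplexOrder

/-- The spectral projection of a Hermitian matrix `A` onto the eigenspaces with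
eigenvalue satisfying the predicate `P`. -/
noncomputable def specProj {n : ℕ} {A : Matrix (Fin n) (Fin n) ℂ}
    (hA : A.IsHermitian) (P : ℝ → Prop) [DecidablePred P] : Matrix (Fin n) (Fin n) ℂ :=
  ∑ i : Fin n, (if P (hA.eigenvalues i) then
    Matrix.vecMulVec (hA.eigenvectorBasis i) (fun j => star (hA.eigenvectorBasis i j))
    else (0 : Matrix (Fin n) (Fin n) ℂ))

/-!
In the eigenbasis `(vᵢ)` of `A`, both `Π_{≥x}^A` and `e^{τA}` are diagonal, so with the weights
`pᵢ = ⟨vᵢ, ρ vᵢ⟩ ≥ 0` the two traces are `∑_{λᵢ ≥ x} pᵢ` and `∑ᵢ e^{τλᵢ} pᵢ`. Markov's inequality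
`e^{τx} ∑_{λᵢ ≥ x} pᵢ ≤ ∑ᵢ e^{τλᵢ} pᵢ ≤ e^{c₁τ² + c₂}` at `τ = x / (2c₁)` gives the bound.
-/

theorem Matrix.trace_vecMulVec_mul {n R : Type*} [Fintype n] [CommSemiring R]
    (u w : n → R) (M : Matrix n n R) :
    trace (vecMulVec u w * M) = w ⬝ᵥ M *ᵥ u := by
  rw [vecMulVec_mul, trace_vecMulVec, dotProduct_comm, dotProduct_mulVec]

namespace Matrix.IsHermitian

variable {n 𝕜 : Type*} [Fintype n] [DecidableEq n] [RCLike 𝕜] {A : Matrix n n 𝕜}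

noncomputable def eigenWeight (hA : A.IsHermitian) (ρ : Matrix n n 𝕜) (i : n) : ℝ :=
  RCLike.re (star ⇑(hA.eigenvectorBasis i) ⬝ᵥ ρ *ᵥ ⇑(hA.eigenvectorBasis i))

theorem eigenWeight_nonneg (hA : A.IsHermitian) {ρ : Matrix n n 𝕜} (hρ : ρ.PosSemidef) (i : n) :
    0 ≤ hA.eigenWeight ρ i :=
  (RCLike.nonneg_iff.mp (hρ.dotProduct_mulVec_nonneg _)).1

theorem trace_conj_diagonal_mul (hA : A.IsHermitian) (d : n → 𝕜) (ρ : Matrix n n 𝕜) :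
    trace (Unitary.conjStarAlgAut 𝕜 _ hA.eigenvectorUnitary (diagonal d) * ρ) =
      ∑ i, d i * (star ⇑(hA.eigenvectorBasis i) ⬝ᵥ ρ *ᵥ ⇑(hA.eigenvectorBasis i)) := by
  rw [Unitary.conjStarAlgAut_apply, mul_assoc, mul_assoc, trace_mul_comm, mul_assoc, trace]
  refine Finset.sum_congr rfl fun i _ => ?_
  rw [diag_apply, diagonal_mul, mul_mul_apply, eigenvectorUnitary_transpose_apply]
  congr 2

theorem exp_smul_eq_conj_diagonal {A : Matrix n n ℂ} (hA : A.IsHermitian) (τ : ℂ) :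
    NormedSpace.exp (τ • A) = Unitary.conjStarAlgAut ℂ _ hA.eigenvectorUnitary
      (diagonal fun i => Complex.exp (τ * hA.eigenvalues i)) := by
  conv_lhs => rw [hA.spectral_theorem, ← map_smul, Unitary.conjStarAlgAut_apply]
  have hinv : (hA.eigenvectorUnitary : Matrix n n ℂ)⁻¹ =
      star (hA.eigenvectorUnitary : Matrix n n ℂ) :=
    inv_eq_left_inv (Unitary.coe_star_mul_self _)
  rw [← hinv, Matrix.exp_conj _ _ Unitary.isUnit_coe, hinv, Unitary.conjStarAlgAut_apply,
    ← diagonal_smul, Matrix.exp_diagonal]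
  congr 3
  ext i
  rw [Pi.coe_exp, ← Complex.exp_eq_exp_ℂ]
  rfl

theorem trace_specProj_mul_re {n : ℕ} {A : Matrix (Fin n) (Fin n) ℂ} (hA : A.IsHermitian)
    (P : ℝ → Prop) [DecidablePred P] (ρ : Matrix (Fin n) (Fin n) ℂ) :
    (trace (specProj hA P * ρ)).re =
      ∑ i, if P (hA.eigenvalues i) then hA.eigenWeight ρ i else 0 := by
  rw [specProj, Finset.sum_mul, trace_sum, Complex.re_sum]
  refine Finset.sum_congr rfl fun i _ => ?_
  split_ifs
  · rw [trace_vecMulVec_mul]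
    rfl
  · simp

theorem trace_exp_smul_mul_re {A : Matrix n n ℂ} (hA : A.IsHermitian) (τ : ℝ)
    (ρ : Matrix n n ℂ) :
    (trace (NormedSpace.exp ((τ : ℂ) • A) * ρ)).re =
      ∑ i, Real.exp (τ * hA.eigenvalues i) * hA.eigenWeight ρ i := by
  rw [exp_smul_eq_conj_diagonal, trace_conj_diagonal_mul, Complex.re_sum]
  refine Finset.sum_congr rfl fun i _ => ?_
  rw [← Complex.ofReal_mul, ← Complex.ofReal_exp, Complex.re_ofReal_mul]
  rfl

end Matrix.IsHermitian

theorem exp_mul_sum_ite_le_sum_exp_mul {ι : Type*} [Fintype ι] {q : ι → ℝ} (hq : ∀ i, 0 ≤ q i)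
    (t : ι → ℝ) {τ : ℝ} (hτ : 0 ≤ τ) (x : ℝ) :
    Real.exp (τ * x) * ∑ i, (if x ≤ t i then q i else 0) ≤ ∑ i, Real.exp (τ * t i) * q i := by
  rw [Finset.mul_sum]
  refine Finset.sum_le_sum fun i _ => ?_
  split_ifs with h
  · exact mul_le_mul_of_nonneg_right (Real.exp_le_exp.mpr (by gcongr)) (hq i)
  · rw [mul_zero]
    exact mul_nonneg (Real.exp_nonneg _) (hq i)

theorem chernoff_markov_from_mgf_general {n : ℕ} (ρ A : Matrix (Fin n) (Fin n) ℂ)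
    (hρ : ρ.PosSemidef) (hA : A.IsHermitian)
    (c₁ c₂ : ℝ) (hc₁ : 0 < c₁)
    (hmgf : ∀ τ : ℝ, 0 ≤ τ →
      Real.log (Matrix.trace (NormedSpace.exp ((τ : ℂ) • A) * ρ)).re ≤ c₁ * τ ^ 2 + c₂) :
    ∀ x : ℝ, 0 ≤ x →
      (Matrix.trace (specProj hA (fun t => x ≤ t) * ρ)).re ≤
        Real.exp (-(x ^ 2 / (4 * c₁)) + c₂) := by
  intro x hx
  set τ := x / (2 * c₁)
  have hτ : 0 ≤ τ := by positivity
  have hmgf_τ : ∑ i, Real.exp (τ * hA.eigenvalues i) * hA.eigenWeight ρ i ≤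
      Real.exp (c₁ * τ ^ 2 + c₂) := by
    rw [← hA.trace_exp_smul_mul_re]
    -- `le_exp_log` also covers a vanishing trace, where `log 0 = 0`.
    exact (Real.le_exp_log _).trans (Real.exp_le_exp.mpr (hmgf τ hτ))
  have hmarkov := exp_mul_sum_ite_le_sum_exp_mul (hA.eigenWeight_nonneg hρ) hA.eigenvalues hτ x
  rw [hA.trace_specProj_mul_re]
  calc _ = Real.exp (-(τ * x)) * (Real.exp (τ * x) *
          ∑ i, if x ≤ hA.eigenvalues i then hA.eigenWeight ρ i else 0) := by
        rw [← mul_assoc, ← Real.exp_add, neg_add_cancel, Real.exp_zero, one_mul]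
    _ ≤ Real.exp (-(τ * x)) * Real.exp (c₁ * τ ^ 2 + c₂) := by gcongr; exact hmarkov.trans hmgf_τ
    _ = Real.exp (-(x ^ 2 / (4 * c₁)) + c₂) := by
        rw [← Real.exp_add]
        congr 1
        simp only [τ]
        field_simp
        ring

theorem chernoff_markov_from_mgf {n : ℕ} (ρ A : Matrix (Fin n) (Fin n) ℂ)
    (hρ : ρ.PosSemidef) (hρtr : ρ.trace = 1) (hA : A.IsHermitian)
    (hmean : Matrix.trace (ρ * A) = 0)
    (c₁ c₂ : ℝ) (hc₁ : 0 < c₁) (hc₂ : 0 ≤ c₂)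
    (hmgf : ∀ τ : ℝ, 0 ≤ τ →
      Real.log (Matrix.trace (NormedSpace.exp ((τ : ℂ) • A) * ρ)).re ≤ c₁ * τ ^ 2 + c₂) :
    ∀ x : ℝ, 0 ≤ x →
      (Matrix.trace (specProj hA (fun t => x ≤ t) * ρ)).re ≤
        Real.exp (-(x ^ 2 / (4 * c₁)) + c₂) :=
  chernoff_markov_from_mgf_general ρ A hρ hA c₁ c₂ hc₁ hmgf
end

section
/- Let A and B be Hermitian operators on a finite-dimensional Hilbert space and ρ a density matrix with spectral decomposition ρ = Σⱼ pⱼ |ψⱼ⟩⟨ψⱼ|. Then for any real τ, Tr(e^{τ(A+B)} ρ) ≤ ‖e^{−τB} e^{τ(A+B)} e^{−τA}‖ · √(Tr(e^{2τA} ρ)) · √(Tr(e^{2τB} ρ)), where ‖·‖ is the operator norm. -/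
/-!
Write `C = e^{-τB} e^{τ(A+B)} e^{-τA}`, so that `e^{τ(A+B)} = (e^{τB})ᴴ C e^{τA}` and
`e^{2τA} = (e^{τA})ᴴ e^{τA}`. Decomposing `ρ = ∑ᵢ vᵢ vᵢᴴ`, the left side becomes
`∑ᵢ Re ⟪e^{τB} vᵢ, C e^{τA} vᵢ⟫ ≤ ‖C‖ ∑ᵢ ‖e^{τA} vᵢ‖ ‖e^{τB} vᵢ‖`, and Cauchy–Schwarz over `i`
turns the last sum into the product of square roots of `∑ᵢ ‖e^{τA} vᵢ‖² = Re Tr(e^{2τA} ρ)` and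
its analogue for `B`.
-/

open Matrix
open scoped ComplexOrder

theorem sum_re_inner_le_opNorm_mul_sqrt_mul_sqrt {𝕜 E F ι : Type*} [RCLike 𝕜]
    [NormedAddCommGroup E] [InnerProductSpace 𝕜 E] [NormedAddCommGroup F] [InnerProductSpace 𝕜 F]
    (s : Finset ι) (T : E →L[𝕜] F) (x : ι → E) (y : ι → F) :
    ∑ i ∈ s, RCLike.re (inner 𝕜 (y i) (T (x i))) ≤
      ‖T‖ * √(∑ i ∈ s, ‖x i‖ ^ 2) * √(∑ i ∈ s, ‖y i‖ ^ 2) := by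
  calc ∑ i ∈ s, RCLike.re (inner 𝕜 (y i) (T (x i)))
      ≤ ∑ i ∈ s, ‖T‖ * (‖x i‖ * ‖y i‖) := by
        refine Finset.sum_le_sum fun i _ => ?_
        calc RCLike.re (inner 𝕜 (y i) (T (x i)))
            ≤ ‖y i‖ * ‖T (x i)‖ := (RCLike.re_le_norm _).trans (norm_inner_le_norm _ _)
          _ ≤ ‖y i‖ * (‖T‖ * ‖x i‖) := by gcongr; exact T.le_opNorm _
          _ = ‖T‖ * (‖x i‖ * ‖y i‖) := by ring
    _ = ‖T‖ * ∑ i ∈ s, ‖x i‖ * ‖y i‖ := (Finset.mul_sum ..).symm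
    _ ≤ ‖T‖ * (√(∑ i ∈ s, ‖x i‖ ^ 2) * √(∑ i ∈ s, ‖y i‖ ^ 2)) := by
        gcongr; exact Real.sum_mul_le_sqrt_mul_sqrt _ _ _
    _ = _ := (mul_assoc ..).symm

namespace Matrix

variable {𝕜 n : Type*} [RCLike 𝕜] [Fintype n] [DecidableEq n]

theorem trace_mul_vecMulVec_star (M : Matrix n n 𝕜) (v : n → 𝕜) :
    trace (M * vecMulVec v (star v)) =
      inner 𝕜 (WithLp.toLp 2 v) (toEuclideanCLM (𝕜 := 𝕜) M (WithLp.toLp 2 v)) := by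
  rw [mul_vecMulVec, trace_vecMulVec]
  rfl

theorem inner_toEuclideanCLM_conjTranspose_mul (M N : Matrix n n 𝕜) (u v : EuclideanSpace 𝕜 n) :
    inner 𝕜 u (toEuclideanCLM (𝕜 := 𝕜) (Mᴴ * N) v) =
      inner 𝕜 (toEuclideanCLM (𝕜 := 𝕜) M u) (toEuclideanCLM (𝕜 := 𝕜) N v) := by
  rw [map_mul, ← star_eq_conjTranspose, map_star, ContinuousLinearMap.star_eq_adjoint,
    mul_apply_eq_comp, ContinuousLinearMap.adjoint_inner_right]

theorem trace_conjTranspose_mul_mul_vecMulVec_star (M N : Matrix n n 𝕜) (v : n → 𝕜) :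
    trace (Mᴴ * N * vecMulVec v (star v)) =
      inner 𝕜 (toEuclideanCLM (𝕜 := 𝕜) M (WithLp.toLp 2 v))
        (toEuclideanCLM (𝕜 := 𝕜) N (WithLp.toLp 2 v)) := by
  rw [trace_mul_vecMulVec_star, inner_toEuclideanCLM_conjTranspose_mul]

theorem PosSemidef.re_trace_conjTranspose_mul_mul_le {ρ : Matrix n n 𝕜} (hρ : ρ.PosSemidef)
    (X Y C : Matrix n n 𝕜) :
    RCLike.re (trace (Yᴴ * C * X * ρ)) ≤ ‖toEuclideanCLM (𝕜 := 𝕜) C‖ *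
      √(RCLike.re (trace (Xᴴ * X * ρ))) * √(RCLike.re (trace (Yᴴ * Y * ρ))) := by
  obtain ⟨m, v, rfl⟩ := posSemidef_iff_eq_sum_vecMulVec.mp hρ
  have hsq (M : Matrix n n 𝕜) : RCLike.re (trace (Mᴴ * M * ∑ i, vecMulVec (v i) (star (v i)))) =
      ∑ i, ‖toEuclideanCLM (𝕜 := 𝕜) M (WithLp.toLp 2 (v i))‖ ^ 2 := by
    simp only [Matrix.mul_sum, trace_sum, map_sum, trace_conjTranspose_mul_mul_vecMulVec_star,
      inner_self_eq_norm_sq]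
  have hcross : trace (Yᴴ * C * X * ∑ i, vecMulVec (v i) (star (v i))) =
      ∑ i, inner 𝕜 (toEuclideanCLM (𝕜 := 𝕜) Y (WithLp.toLp 2 (v i)))
        (toEuclideanCLM (𝕜 := 𝕜) C (toEuclideanCLM (𝕜 := 𝕜) X (WithLp.toLp 2 (v i)))) := by
    simp only [Matrix.mul_assoc Yᴴ C X, Matrix.mul_sum, trace_sum,
      trace_conjTranspose_mul_mul_vecMulVec_star, map_mul, mul_apply_eq_comp]
  rw [hsq, hsq, hcross, map_sum]
  exact sum_re_inner_le_opNorm_mul_sqrt_mul_sqrt _ _ _ _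

theorem exp_mul_exp_neg (M : Matrix n n 𝕜) : NormedSpace.exp M * NormedSpace.exp (-M) = 1 := by
  rw [← exp_add_of_commute _ _ (Commute.neg_right (Commute.refl M)), add_neg_cancel,
    NormedSpace.exp_zero]

theorem exp_neg_mul_exp (M : Matrix n n 𝕜) : NormedSpace.exp (-M) * NormedSpace.exp M = 1 := by
  simpa using exp_mul_exp_neg (-M)

theorem exp_mul_exp_neg_mul_mul_exp_neg_mul_exp (P Q X : Matrix n n 𝕜) :
    NormedSpace.exp P * (NormedSpace.exp (-P) * X * NormedSpace.exp (-Q)) * NormedSpace.exp Q =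
      X := by
  simp only [← Matrix.mul_assoc, exp_mul_exp_neg, Matrix.one_mul]
  rw [Matrix.mul_assoc, exp_neg_mul_exp, Matrix.mul_one]

theorem exp_two_smul (M : Matrix n n 𝕜) :
    NormedSpace.exp ((2 : 𝕜) • M) = NormedSpace.exp M * NormedSpace.exp M := by
  rw [two_smul, exp_add_of_commute _ _ (Commute.refl M)]

end Matrix

theorem mgf_splitting_bound_general {n : ℕ} (ρ A B : Matrix (Fin n) (Fin n) ℂ)
    (hρ : ρ.PosSemidef)
    (hA : A.IsHermitian) (hB : B.IsHermitian) (τ : ℝ) :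
    (Matrix.trace (NormedSpace.exp ((τ : ℂ) • (A + B)) * ρ)).re ≤
      ‖Matrix.toEuclideanCLM (𝕜 := ℂ)
          (NormedSpace.exp ((-τ : ℂ) • B) * NormedSpace.exp ((τ : ℂ) • (A + B)) *
            NormedSpace.exp ((-τ : ℂ) • A))‖ *
        Real.sqrt (Matrix.trace (NormedSpace.exp ((2 * τ : ℂ) • A) * ρ)).re *
        Real.sqrt (Matrix.trace (NormedSpace.exp ((2 * τ : ℂ) • B) * ρ)).re := by
  have hτ : IsSelfAdjoint (τ : ℂ) := Complex.conj_ofReal τ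
  have key := hρ.re_trace_conjTranspose_mul_mul_le (NormedSpace.exp ((τ : ℂ) • A))
    (NormedSpace.exp ((τ : ℂ) • B))
    (NormedSpace.exp ((-τ : ℂ) • B) * NormedSpace.exp ((τ : ℂ) • (A + B)) *
      NormedSpace.exp ((-τ : ℂ) • A))
  rw [neg_smul, neg_smul] at key ⊢
  rw [((hA.smul hτ).exp).eq, ((hB.smul hτ).exp).eq, ← exp_two_smul, ← exp_two_smul,
    smul_smul, smul_smul, exp_mul_exp_neg_mul_mul_exp_neg_mul_exp] at key
  simpa only [RCLike.re_to_complex] using key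

theorem mgf_splitting_bound {n : ℕ} (ρ A B : Matrix (Fin n) (Fin n) ℂ)
    (hρ : ρ.PosSemidef) (hρtr : ρ.trace = 1)
    (hA : A.IsHermitian) (hB : B.IsHermitian) (τ : ℝ) :
    (Matrix.trace (NormedSpace.exp ((τ : ℂ) • (A + B)) * ρ)).re ≤
      ‖Matrix.toEuclideanCLM (𝕜 := ℂ)
          (NormedSpace.exp ((-τ : ℂ) • B) * NormedSpace.exp ((τ : ℂ) • (A + B)) *
            NormedSpace.exp ((-τ : ℂ) • A))‖ *
        Real.sqrt (Matrix.trace (NormedSpace.exp ((2 * τ : ℂ) • A) * ρ)).re *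
        Real.sqrt (Matrix.trace (NormedSpace.exp ((2 * τ : ℂ) • B) * ρ)).re :=
  mgf_splitting_bound_general ρ A B hρ hA hB τ
end

section
/- For all real x with 0 ≤ x ≤ 1/4, (1/2) log(1−x) − (1/6) log(1−3x) ≤ (3/2) x². -/
/-! With `g x = 3/2 x² - 1/2 log (1 - x) + 1/6 log (1 - 3x)` one computes
`g' x = x ((3x - 2)² - 2) / ((1 - x)(1 - 3x))`, so on `[0, 1/4]` the function `g` increases up to
`s = (2 - √2)/3` and decreases afterwards. Hence `g ≥ min (g 0) (g (1/4))`, where `g 0 = 0` and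
`6 g (1/4) = 9/16 - log (27/16) ≥ 0` because `exp (9/16) ≥ 1 + 9/16 + (9/16)²/2 ≥ 27/16`. -/

open Real Set

lemma min_le_of_monotoneOn_of_antitoneOn {f : ℝ → ℝ} {a b c x : ℝ}
    (hmono : MonotoneOn f (Icc a c)) (hanti : AntitoneOn f (Icc c b)) (hx : x ∈ Icc a b) :
    min (f a) (f b) ≤ f x := by
  rcases le_or_gt x c with hxc | hcx
  · exact min_le_of_left_le <| hmono ⟨le_rfl, hx.1.trans hxc⟩ ⟨hx.1, hxc⟩ hx.1
  · exact min_le_of_right_le <| hanti ⟨hcx.le, hx.2⟩ ⟨hcx.le.trans hx.2, le_rfl⟩ hx.2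

noncomputable def logSlack (x : ℝ) : ℝ :=
  3 / 2 * x ^ 2 - 1 / 2 * log (1 - x) + 1 / 6 * log (1 - 3 * x)

lemma hasDerivAt_logSlack {x : ℝ} (h₁ : 1 - x ≠ 0) (h₃ : 1 - 3 * x ≠ 0) :
    HasDerivAt logSlack (x * ((3 * x - 2) ^ 2 - 2) / ((1 - x) * (1 - 3 * x))) x := by
  have hlog₁ : HasDerivAt (fun y => log (1 - y)) (-1 / (1 - x)) x := by
    simpa using ((hasDerivAt_id x).const_sub 1).log h₁
  have hlog₃ : HasDerivAt (fun y => log (1 - 3 * y)) (-3 / (1 - 3 * x)) x := by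
    simpa using (((hasDerivAt_id x).const_mul 3).const_sub 1).log h₃
  refine ((((hasDerivAt_pow 2 x).const_mul (3 / 2)).sub (hlog₁.const_mul (1 / 2))).add
    (hlog₃.const_mul (1 / 6))).congr_deriv ?_
  field_simp
  ring

lemma hasDerivAt_logSlack_of_lt {x : ℝ} (hx : x < 1 / 3) :
    HasDerivAt logSlack (x * ((3 * x - 2) ^ 2 - 2) / ((1 - x) * (1 - 3 * x))) x :=
  hasDerivAt_logSlack (sub_pos.2 (by linarith)).ne' (sub_pos.2 (by linarith)).ne'

lemma continuousOn_logSlack : ContinuousOn logSlack (Iio (1 / 3)) := fun _ hx =>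
  (hasDerivAt_logSlack_of_lt hx).continuousAt.continuousWithinAt

lemma monotoneOn_logSlack : MonotoneOn logSlack (Icc 0 ((2 - √2) / 3)) := by
  have hsqrt : 1 < √2 := by rw [lt_sqrt zero_le_one]; norm_num
  have hs : (2 - √2) / 3 < 1 / 3 := by linarith
  refine monotoneOn_of_hasDerivWithinAt_nonneg (convex_Icc _ _)
    (continuousOn_logSlack.mono fun y hy => hy.2.trans_lt hs)
    (fun y hy => (hasDerivAt_logSlack_of_lt ?_).hasDerivWithinAt) fun y hy => ?_
  all_goals rw [interior_Icc] at hy; obtain ⟨hy₀, hys⟩ := hy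
  · linarith
  · have hroot : √2 ≤ 2 - 3 * y := by linarith
    have hnum : 0 ≤ (3 * y - 2) ^ 2 - 2 := by
      nlinarith [sq_sqrt (show (0 : ℝ) ≤ 2 by norm_num), sqrt_nonneg 2]
    have h₁ : 0 < 1 - y := by linarith
    have h₃ : 0 < 1 - 3 * y := by linarith
    exact div_nonneg (mul_nonneg hy₀.le hnum) (mul_pos h₁ h₃).le

lemma antitoneOn_logSlack : AntitoneOn logSlack (Icc ((2 - √2) / 3) (1 / 4)) := by
  have hsqrt : √2 < 2 := by rw [sqrt_lt' two_pos]; norm_num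
  refine antitoneOn_of_hasDerivWithinAt_nonpos (convex_Icc _ _)
    (continuousOn_logSlack.mono fun y hy => show y < 1 / 3 by linarith [hy.2])
    (fun y hy => (hasDerivAt_logSlack_of_lt ?_).hasDerivWithinAt) fun y hy => ?_
  all_goals rw [interior_Icc] at hy; obtain ⟨hsy, hy⟩ := hy
  · linarith
  · have hroot : 2 - 3 * y < √2 := by linarith
    have hnum : (3 * y - 2) ^ 2 - 2 ≤ 0 := by
      nlinarith [sq_sqrt (show (0 : ℝ) ≤ 2 by norm_num), sqrt_nonneg 2]
    have h₁ : 0 < 1 - y := by linarith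
    have h₃ : 0 < 1 - 3 * y := by linarith
    exact div_nonpos_of_nonpos_of_nonneg
      (mul_nonpos_of_nonneg_of_nonpos (by linarith) hnum) (mul_pos h₁ h₃).le

lemma logSlack_zero : logSlack 0 = 0 := by
  simp [logSlack]

lemma log_27_div_16_le : log (27 / 16) ≤ 9 / 16 := by
  rw [log_le_iff_le_exp (by norm_num)]
  linarith [quadratic_le_exp_of_nonneg (show (0 : ℝ) ≤ 9 / 16 by norm_num)]

lemma logSlack_quarter : logSlack (1 / 4) = (9 / 16 - log (27 / 16)) / 6 := by
  rw [show (27 / 16 : ℝ) = (1 - 1 / 4) ^ 3 / (1 - 3 * (1 / 4)) by norm_num,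
    log_div (by norm_num) (by norm_num), log_pow, logSlack]
  ring

lemma logSlack_quarter_nonneg : 0 ≤ logSlack (1 / 4) := by
  rw [logSlack_quarter]
  linarith [log_27_div_16_le]

theorem log_combination_le_quadratic :
    ∀ x : ℝ, 0 ≤ x → x ≤ 1 / 4 →
      (1 / 2) * Real.log (1 - x) - (1 / 6) * Real.log (1 - 3 * x) ≤ (3 / 2) * x ^ 2 := by
  intro x hx₀ hx₁
  have hslack : min (logSlack 0) (logSlack (1 / 4)) ≤ logSlack x :=
    min_le_of_monotoneOn_of_antitoneOn monotoneOn_logSlack antitoneOn_logSlack ⟨hx₀, hx₁⟩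
  rw [logSlack_zero, min_eq_left logSlack_quarter_nonneg] at hslack
  unfold logSlack at hslack
  linarith
end

section
/- Let A and B be Hermitian operators, and suppose there exists λ > 0 such that ‖ad_{A+B}^{m-1}([A,B])‖ ≤ (2λ)^{m−1} m! ‖[A,B]‖ and ‖ad_B^n(ad_{A+B}^m(B))‖ ≤ 2^{m−1} λ^{n+m−1} (n+m)! ‖[A,B]‖ for all n ≥ 0, m ≥ 1. Then for |x| < 1/(3λ), the operator B̃(x) := e^{−xB} e^{x(A+B)} B e^{−x(A+B)} e^{xB} satisfies ‖B̃(x) − B‖ ≤ |x| ‖[A,B]‖ / ((1 − 3λ|x|)(1 − λ|x|)). -/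
open Matrix

/-- The commutator `[X, Y] = XY - YX` of matrices. -/
noncomputable def matComm {n : ℕ} (X Y : Matrix (Fin n) (Fin n) ℂ) : Matrix (Fin n) (Fin n) ℂ :=
  X * Y - Y * X

/-- Iterated adjoint action `ad_X^k (Y)`. -/
noncomputable def adPow {n : ℕ} (X : Matrix (Fin n) (Fin n) ℂ) : ℕ → Matrix (Fin n) (Fin n) ℂ →
    Matrix (Fin n) (Fin n) ℂ
  | 0, Y => Y
  | k + 1, Y => matComm X (adPow X k Y)

/-- Operator norm of a matrix, viewed as an operator on `EuclideanSpace ℂ (Fin n)`. -/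
noncomputable def opNorm {n : ℕ} (M : Matrix (Fin n) (Fin n) ℂ) : ℝ :=
  ‖Matrix.toEuclideanCLM (𝕜 := ℂ) M‖

/-!
Conjugation by `exp u` is `exp (ad u)` (Hadamard's lemma). With `u = -xB`, `v = x(A+B)` and
`exp (ad u) B = B`, the operator `B̃(x) - B` is therefore `exp (ad u) (exp (ad v) B - B)`, the
double series `∑_{k ≥ 0, m ≥ 1} ad_u^k ad_v^m B / (k! m!)`. After bounding its terms by the
hypothesis, the sum over `k` is the negative binomial series
`∑_k C(k+m, m) r^k = (1 - r)^{-(m+1)}` with `r = λ|x|`, and the sum over `m` is a geometric series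
of ratio `2r / (1 - r)`, which is `< 1` exactly when `3r < 1`.
-/

open NormedSpace
open scoped Nat

section Series

variable {E : Type*} [NormedAddCommGroup E] [NormedSpace ℚ E]

theorem norm_inv_factorial_smul (k : ℕ) (v : E) : ‖(k !⁻¹ : ℚ) • v‖ = ‖v‖ / k ! := by
  rw [norm_smul, ← Rat.norm_cast_real]
  simp [div_eq_inv_mul]

variable [CompleteSpace E]

theorem hasSum_exp_apply (S : E →L[ℚ] E) (v : E) :
    HasSum (fun k => (k !⁻¹ : ℚ) • (S ^ k) v) (exp S v) := by
  simpa using (exp_series_hasSum_exp' (𝕂 := ℚ) S).mapL (ContinuousLinearMap.apply ℚ E v)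

theorem hasSum_exp_apply_sub (S : E →L[ℚ] E) (v : E) :
    HasSum (fun k => ((k + 1)!⁻¹ : ℚ) • (S ^ (k + 1)) v) (exp S v - v) := by
  simpa using (hasSum_nat_add_iff' 1).mpr (hasSum_exp_apply S v)

theorem norm_exp_apply_le_of_norm_pow_apply_le {S : E →L[ℚ] E} {v : E} {r C : ℝ} (p : ℕ)
    (hr0 : 0 ≤ r) (hr1 : r < 1) (h : ∀ k, ‖(S ^ k) v‖ ≤ C * (k + p)! / p ! * r ^ k) :
    ‖exp S v‖ ≤ C / (1 - r) ^ (p + 1) := by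
  have hgeom := (hasSum_choose_mul_geometric_of_norm_lt_one p
    (by rwa [Real.norm_of_nonneg hr0] : ‖r‖ < 1)).mul_left C
  rw [mul_one_div] at hgeom
  refine (hasSum_exp_apply S v).norm_le_of_bounded hgeom fun k => ?_
  rw [norm_inv_factorial_smul, div_le_iff₀ (by positivity), ← Nat.choose_symm_add,
    Nat.cast_add_choose]
  refine (h k).trans_eq ?_
  field_simp

theorem norm_exp_apply_exp_apply_sub_le {S T : E →L[ℚ] E} {v : E} {r c : ℝ} (hr0 : 0 ≤ r)
    (hr : 3 * r < 1)
    (h : ∀ k m, 1 ≤ m → ‖(S ^ k) ((T ^ m) v)‖ ≤ 2 ^ (m - 1) * r ^ (k + m - 1) * (k + m)! * c) :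
    ‖exp S (exp T v - v)‖ ≤ c / ((1 - 3 * r) * (1 - r)) := by
  have hr1 : 0 < 1 - r := by linarith
  have hterm (m : ℕ) :
      ‖exp S ((T ^ (m + 1)) v)‖ ≤ (m + 1)! * c * (2 * r) ^ m / (1 - r) ^ (m + 2) := by
    refine norm_exp_apply_le_of_norm_pow_apply_le (m + 1) hr0 (by linarith) fun k =>
      (h k (m + 1) (Nat.le_add_left 1 m)).trans_eq ?_
    rw [Nat.add_sub_cancel, show k + (m + 1) - 1 = m + k by omega, ← add_assoc]
    field_simp
    ring
  have hq : 2 * r / (1 - r) < 1 := by rw [div_lt_one hr1]; linarith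
  have hgeom := (hasSum_geometric_of_lt_one (by positivity) hq).mul_left (c / (1 - r) ^ 2)
  have hseries := (hasSum_exp_apply_sub T v).mapL (exp S)
  simp only [map_smul] at hseries
  refine (hseries.norm_le_of_bounded hgeom fun m => ?_).trans_eq ?_
  · rw [norm_inv_factorial_smul, div_le_iff₀ (by positivity)]
    refine (hterm m).trans_eq ?_
    rw [div_pow]
    field_simp
    ring
  · field_simp
    ring

end Series

section BanachAlgebra

variable {𝔸 : Type*} [NormedRing 𝔸] [NormedAlgebra ℚ 𝔸]

noncomputable def ad (u : 𝔸) : 𝔸 →L[ℚ] 𝔸 :=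
  ContinuousLinearMap.mul ℚ 𝔸 u - (ContinuousLinearMap.mul ℚ 𝔸).flip u

theorem ad_apply (u y : 𝔸) : ad u y = u * y - y * u := rfl

variable [CompleteSpace 𝔸]

theorem ContinuousLinearMap.map_exp_of_map_pow {𝔹 : Type*} [NormedRing 𝔹] [NormedAlgebra ℚ 𝔹]
    [CompleteSpace 𝔹] (f : 𝔸 →L[ℚ] 𝔹) {x : 𝔸} (hf : ∀ k, f (x ^ k) = f x ^ k) :
    f (exp x) = exp (f x) := by
  have h := (exp_series_hasSum_exp' (𝕂 := ℚ) x).mapL f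
  simp only [map_smul, hf] at h
  exact h.unique (exp_series_hasSum_exp' (f x))

/-- Hadamard's lemma. The proof splits `ad u` into the commuting left and right multiplications. -/
theorem exp_ad_apply (u y : 𝔸) : exp (ad u) y = exp u * y * exp (-u) := by
  set L := ContinuousLinearMap.mul ℚ 𝔸
  have hL (x : 𝔸) : L (exp x) = exp (L x) := L.map_exp_of_map_pow fun k => by
    induction k with
    | zero => ext; simp [L]
    | succ k ih => rw [pow_succ, pow_succ, ← ih]; ext; simp [L, mul_assoc]
  have hR (x : 𝔸) : L.flip (exp x) = exp (L.flip x) := L.flip.map_exp_of_map_pow fun k => by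
    induction k with
    | zero => ext; simp [L]
    | succ k ih => rw [pow_succ', pow_succ, ← ih]; ext; simp [L, mul_assoc]
  have hcomm : Commute (L u) (L.flip (-u)) := by ext; simp [L, mul_assoc]
  rw [ad, sub_eq_add_neg, ← map_neg, exp_add_of_commute hcomm, ← hL, ← hR]
  simp [L, mul_assoc]

theorem exp_ad_apply_of_commute {u y : 𝔸} (h : Commute u y) : exp (ad u) y = y := by
  simpa [exp_ad_apply] using h.symm.neg_right.exp_neg_mul_mul_exp_eq_self

theorem norm_conj_exp_exp_sub_le {u v y : 𝔸} (huy : Commute u y) {r c : ℝ} (hr0 : 0 ≤ r)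
    (hr : 3 * r < 1)
    (h : ∀ k m, 1 ≤ m →
      ‖(ad u ^ k) ((ad v ^ m) y)‖ ≤ 2 ^ (m - 1) * r ^ (k + m - 1) * (k + m)! * c) :
    ‖exp u * exp v * y * exp (-v) * exp (-u) - y‖ ≤ c / ((1 - 3 * r) * (1 - r)) := by
  have hconj : exp u * exp v * y * exp (-v) * exp (-u) - y = exp (ad u) (exp (ad v) y - y) := by
    rw [map_sub, exp_ad_apply_of_commute huy, exp_ad_apply, exp_ad_apply]
    simp only [mul_assoc]
  rw [hconj]
  exact norm_exp_apply_exp_apply_sub_le hr0 hr h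

end BanachAlgebra

section Matrix

/- The L2 operator norm makes the matrices a Banach algebra with norm `opNorm`; restricting its
scalars to `ℚ` recovers the `ℚ`-algebra structure through which `NormedSpace.exp` is defined. -/
open scoped Matrix.Norms.L2Operator

variable {n : ℕ}

noncomputable local instance : NormedAlgebra ℚ (Matrix (Fin n) (Fin n) ℂ) :=
  .restrictScalars ℚ ℂ _

theorem opNorm_eq_norm (M : Matrix (Fin n) (Fin n) ℂ) : opNorm M = ‖M‖ := rfl

theorem ad_pow_apply_eq_adPow (X Y : Matrix (Fin n) (Fin n) ℂ) (k : ℕ) :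
    (ad X ^ k) Y = adPow X k Y := by
  induction k with
  | zero => rfl
  | succ k ih => rw [pow_succ', mul_apply_eq_comp, ih, ad_apply]; rfl

theorem adPow_smul_left (c : ℂ) (X Y : Matrix (Fin n) (Fin n) ℂ) (k : ℕ) :
    adPow (c • X) k Y = c ^ k • adPow X k Y := by
  induction k with
  | zero => simp [adPow]
  | succ k ih =>
    simp only [adPow, matComm, ih, smul_mul_assoc, mul_smul_comm]
    module

theorem adPow_smul_right (c : ℂ) (X Y : Matrix (Fin n) (Fin n) ℂ) (k : ℕ) :
    adPow X k (c • Y) = c • adPow X k Y := by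
  induction k with
  | zero => rfl
  | succ k ih => simp only [adPow, matComm, ih, smul_mul_assoc, mul_smul_comm, smul_sub]

theorem norm_ad_smul_pow_ad_smul_pow_apply (s t : ℂ) (X H Y : Matrix (Fin n) (Fin n) ℂ)
    (k m : ℕ) :
    ‖(ad (s • X) ^ k) ((ad (t • H) ^ m) Y)‖ =
      ‖s‖ ^ k * ‖t‖ ^ m * opNorm (adPow X k (adPow H m Y)) := by
  rw [ad_pow_apply_eq_adPow, ad_pow_apply_eq_adPow, adPow_smul_left, adPow_smul_left,
    adPow_smul_right, smul_smul, norm_smul, norm_mul, norm_pow, norm_pow, opNorm_eq_norm]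

end Matrix

theorem interaction_picture_bound_general {n : ℕ} (A B : Matrix (Fin n) (Fin n) ℂ)
    (lam : ℝ) (hlam : 0 < lam)
    (h2 : ∀ (nn m : ℕ), 1 ≤ m →
      opNorm (adPow B nn (adPow (A + B) m B)) ≤
        2 ^ (m - 1) * lam ^ (nn + m - 1) * (Nat.factorial (nn + m)) * opNorm (matComm A B)) :
    ∀ x : ℝ, |x| < 1 / (3 * lam) →
      opNorm
        (NormedSpace.exp ((-x : ℂ) • B) * NormedSpace.exp ((x : ℂ) • (A + B)) * B *
            NormedSpace.exp ((-x : ℂ) • (A + B)) * NormedSpace.exp ((x : ℂ) • B) - B) ≤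
        |x| * opNorm (matComm A B) / ((1 - 3 * lam * |x|) * (1 - lam * |x|)) := by
  open scoped Matrix.Norms.L2Operator in
  let _ : NormedAlgebra ℚ (Matrix (Fin n) (Fin n) ℂ) := .restrictScalars ℚ ℂ _
  intro x hx
  have hr : 3 * (lam * |x|) < 1 := by
    rw [lt_div_iff₀ (by positivity)] at hx
    linarith
  have hbound (k m : ℕ) (hm : 1 ≤ m) :
      ‖(ad ((-x : ℂ) • B) ^ k) ((ad ((x : ℂ) • (A + B)) ^ m) B)‖ ≤
        2 ^ (m - 1) * (lam * |x|) ^ (k + m - 1) * (k + m)! * (|x| * opNorm (matComm A B)) := by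
    obtain ⟨j, rfl⟩ := Nat.exists_eq_add_of_le' hm
    rw [norm_ad_smul_pow_ad_smul_pow_apply, norm_neg, Complex.norm_real, Real.norm_eq_abs]
    calc |x| ^ k * |x| ^ (j + 1) * opNorm (adPow B k (adPow (A + B) (j + 1) B))
        ≤ |x| ^ k * |x| ^ (j + 1) *
            (2 ^ j * lam ^ (k + j) * (k + (j + 1))! * opNorm (matComm A B)) :=
          mul_le_mul_of_nonneg_left (h2 k (j + 1) hm) (by positivity)
      _ = _ := by rw [Nat.add_sub_cancel, ← add_assoc, Nat.add_sub_cancel]; ring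
  have key :=
    norm_conj_exp_exp_sub_le ((Commute.refl B).smul_left (-x : ℂ)) (by positivity) hr hbound
  simpa only [neg_smul, neg_neg, ← mul_assoc, opNorm_eq_norm] using key

theorem interaction_picture_bound {n : ℕ} (A B : Matrix (Fin n) (Fin n) ℂ)
    (hA : A.IsHermitian) (hB : B.IsHermitian) (lam : ℝ) (hlam : 0 < lam)
    (h1 : ∀ m : ℕ, 1 ≤ m →
      opNorm (adPow (A + B) (m - 1) (matComm A B)) ≤
        (2 * lam) ^ (m - 1) * (Nat.factorial m) * opNorm (matComm A B))
    (h2 : ∀ (nn m : ℕ), 1 ≤ m →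
      opNorm (adPow B nn (adPow (A + B) m B)) ≤
        2 ^ (m - 1) * lam ^ (nn + m - 1) * (Nat.factorial (nn + m)) * opNorm (matComm A B)) :
    ∀ x : ℝ, |x| < 1 / (3 * lam) →
      opNorm
        (NormedSpace.exp ((-x : ℂ) • B) * NormedSpace.exp ((x : ℂ) • (A + B)) * B *
            NormedSpace.exp ((-x : ℂ) • (A + B)) * NormedSpace.exp ((x : ℂ) • B) - B) ≤
        |x| * opNorm (matComm A B) / ((1 - 3 * lam * |x|) * (1 - lam * |x|)) :=
  interaction_picture_bound_general A B lam hlam h2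
end

section
/- Let ρ be a density matrix, A a Hermitian operator, and λ, σ > 0 constants. Suppose that for every positive integer m, Tr(A^m ρ) ≤ λ^m (m−1 + σ/λ)(m−2 + σ/λ)···(σ/λ) = λ^m ∏_{j=0}^{m-1}(j + σ/λ). Then for all τ with 0 ≤ λτ < 1, Tr(e^{τA} ρ) ≤ (1 − λτ)^{−σ/λ}. -/
/-!
Expanding `exp (τ • A)` in its power series, `Tr(e^{τA} ρ) = ∑ τ^m Tr(A^m ρ) / m!`. Since `τ ≥ 0`,
the moment bounds dominate this series term by term by `∑ (λτ)^m / m! · ∏_{j<m} (j + σ/λ)`, the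
binomial series of `(1 - λτ)^{-σ/λ}`.
-/

open Matrix Finset
open scoped ComplexOrder

theorem ascPochhammer_eval_eq_prod_range {R : Type*} [CommSemiring R] (n : ℕ) (r : R) :
    (ascPochhammer R n).eval r = ∏ j ∈ range n, (r + j) := by
  induction n with
  | zero => simp
  | succ n ih => rw [ascPochhammer_succ_eval, ih, prod_range_succ]

theorem Ring.choose_add_sub_one_self {K : Type*} [Field K] [CharZero K] (s : K) (n : ℕ) :
    Ring.choose (s + n - 1) n = (∏ j ∈ range n, (s + j)) / n.factorial := by
  rw [Ring.choose_eq_smul, Polynomial.descPochhammer_smeval_eq_ascPochhammer,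
    show s + n - 1 - n + 1 = s by ring, Polynomial.ascPochhammer_smeval_eq_eval,
    ascPochhammer_eval_eq_prod_range, smul_eq_mul, inv_mul_eq_div]

theorem Real.hasSum_pow_mul_prod_div_factorial {s x : ℝ} (hx : |x| < 1) :
    HasSum (fun m : ℕ => x ^ m / m.factorial * ∏ j ∈ range m, ((j : ℝ) + s)) ((1 - x) ^ (-s)) := by
  have hx' : x ∈ Metric.eball (0 : ℝ) 1 := by
    rwa [Metric.mem_eball, edist_zero_right, ← ofReal_norm, ENNReal.ofReal_lt_one,
      Real.norm_eq_abs]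
  have H := (Real.one_div_one_sub_rpow_hasFPowerSeriesOnBall_zero s).hasSum hx'
  simp only [FormalMultilinearSeries.ofScalars_apply_eq, Ring.choose_add_sub_one_self, smul_eq_mul,
    zero_add, one_div, ← Real.rpow_neg (by linarith [le_abs_self x] : 0 ≤ 1 - x)] at H
  refine H.congr_fun fun m => ?_
  rw [prod_congr rfl fun (j : ℕ) _ => add_comm (j : ℝ) s]
  ring

attribute [local instance] Matrix.linftyOpNormedRing Matrix.linftyOpNormedAlgebra in
theorem Matrix.hasSum_trace_pow_mul {m 𝕂 : Type*} [Fintype m] [DecidableEq m] [RCLike 𝕂]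
    (M ρ : Matrix m m 𝕂) :
    HasSum (fun k : ℕ => (k.factorial⁻¹ : 𝕂) • trace (M ^ k * ρ))
      (trace (NormedSpace.exp M * ρ)) := by
  let f := (traceLinearMap m 𝕂 𝕂).comp (LinearMap.mulRight 𝕂 ρ)
  have H := (NormedSpace.exp_series_hasSum_exp' (𝕂 := 𝕂) M).map f f.continuous_of_finiteDimensional
  simp only [f, Function.comp_def, LinearMap.comp_apply, LinearMap.mulRight_apply, smul_mul_assoc,
    traceLinearMap_apply, trace_smul] at H
  exact H

theorem Matrix.hasSum_re_trace_exp_smul_mul {m : Type*} [Fintype m] [DecidableEq m]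
    (A ρ : Matrix m m ℂ) (τ : ℝ) :
    HasSum (fun k : ℕ => τ ^ k / k.factorial * (trace (A ^ k * ρ)).re)
      (trace (NormedSpace.exp ((τ : ℂ) • A) * ρ)).re := by
  refine (Complex.hasSum_re (hasSum_trace_pow_mul _ ρ)).congr_fun fun k => ?_
  rw [smul_pow, smul_mul_assoc, trace_smul, smul_eq_mul, smul_eq_mul, ← mul_assoc,
    ← Complex.ofReal_pow, ← Complex.ofReal_natCast, ← Complex.ofReal_inv, ← Complex.ofReal_mul,
    Complex.re_ofReal_mul, inv_mul_eq_div]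

theorem mgf_from_moment_bounds_general {n : ℕ} (ρ A : Matrix (Fin n) (Fin n) ℂ)
    (hρtr : ρ.trace = 1)
    (lam sigma : ℝ) (hlam : 0 < lam)
    (hmom : ∀ m : ℕ, 1 ≤ m →
      (Matrix.trace (A ^ m * ρ)).re ≤
        lam ^ m * ∏ j ∈ Finset.range m, ((j : ℝ) + sigma / lam)) :
    ∀ τ : ℝ, 0 ≤ τ → lam * τ < 1 →
      (Matrix.trace (NormedSpace.exp ((τ : ℂ) • A) * ρ)).re ≤
        (1 - lam * τ) ^ (-(sigma / lam)) := by
  intro τ hτ hlt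
  have hlamτ : |lam * τ| < 1 := abs_lt.2 ⟨by nlinarith, hlt⟩
  refine hasSum_le (fun k => ?_) (hasSum_re_trace_exp_smul_mul A ρ τ)
    (Real.hasSum_pow_mul_prod_div_factorial hlamτ)
  rcases Nat.eq_zero_or_pos k with rfl | hk
  · simp [hρtr]
  · calc τ ^ k / k.factorial * (trace (A ^ k * ρ)).re
        ≤ τ ^ k / k.factorial * (lam ^ k * ∏ j ∈ range k, ((j : ℝ) + sigma / lam)) := by
          gcongr
          exact hmom k hk
      _ = (lam * τ) ^ k / k.factorial * ∏ j ∈ range k, ((j : ℝ) + sigma / lam) := by ring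

theorem mgf_from_moment_bounds {n : ℕ} (ρ A : Matrix (Fin n) (Fin n) ℂ)
    (hρ : ρ.PosSemidef) (hρtr : ρ.trace = 1) (hA : A.IsHermitian)
    (lam sigma : ℝ) (hlam : 0 < lam) (hsigma : 0 < sigma)
    (hmom : ∀ m : ℕ, 1 ≤ m →
      (Matrix.trace (A ^ m * ρ)).re ≤
        lam ^ m * ∏ j ∈ Finset.range m, ((j : ℝ) + sigma / lam)) :
    ∀ τ : ℝ, 0 ≤ τ → lam * τ < 1 →
      (Matrix.trace (NormedSpace.exp ((τ : ℂ) • A) * ρ)).re ≤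
        (1 - lam * τ) ^ (-(sigma / lam)) :=
  mgf_from_moment_bounds_general ρ A hρtr lam sigma hlam hmom
end

section
/- Let ρ be a density matrix, A a Hermitian operator, and λ, σ > 0 with log Tr(e^{τA} ρ) ≤ −(σ/λ) log(1 − λτ) for all 0 ≤ τ < 1/λ. Then for every x ≥ σ, Tr(Π_{≥x}^A ρ) ≤ (x/σ)^{σ/λ} e^{−(x−σ)/λ}, where Π_{≥x}^A is the spectral projection of A onto eigenvalues ≥ x. -/
open Matrix
open scoped ComplexOrder

/-! Measured in the eigenbasis of `A`, the state `ρ` puts nonnegative weight `⟨vᵢ, ρ vᵢ⟩` on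
each eigenvalue `λᵢ`, and both traces are sums against these weights. Markov's trick
`1[x ≤ t] ≤ exp (τ (t - x))` for `τ ≥ 0` then gives the Chernoff bound
`Tr(Π ρ) ≤ exp (-τ x) Tr(exp (τ A) ρ)`, and the moment bound is applied at the optimal
`τ = (x - σ) / (λ x)`. -/

namespace Matrix

theorem trace_vecMulVec_mul_s9 {m R : Type*} [Fintype m] [CommSemiring R] (v w : m → R)
    (M : Matrix m m R) : trace (vecMulVec v w * M) = w ⬝ᵥ (M *ᵥ v) := by
  rw [vecMulVec_mul, trace_vecMulVec, dotProduct_comm, dotProduct_mulVec]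

namespace IsHermitian

variable {m : Type*} [Fintype m] [DecidableEq m] {A : Matrix m m ℂ} (hA : A.IsHermitian)

theorem eigenvectorUnitary_mul_diagonal_mul_star (c : m → ℂ) :
    (hA.eigenvectorUnitary : Matrix m m ℂ) * diagonal c *
        star (hA.eigenvectorUnitary : Matrix m m ℂ) =
      ∑ i, c i • vecMulVec (hA.eigenvectorBasis i) (star ⇑(hA.eigenvectorBasis i)) := by
  ext a b
  rw [mul_apply]
  simp only [mul_diagonal, star_apply, eigenvectorUnitary_apply, sum_apply, smul_apply,
    vecMulVec_apply, Pi.star_apply, smul_eq_mul]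
  exact Finset.sum_congr rfl fun i _ => by ring

theorem exp_real_smul (τ : ℝ) :
    NormedSpace.exp ((τ : ℂ) • A) =
      (hA.eigenvectorUnitary : Matrix m m ℂ) *
          diagonal (fun i => (Real.exp (τ * hA.eigenvalues i) : ℂ)) *
        star (hA.eigenvectorUnitary : Matrix m m ℂ) := by
  set U : Matrix m m ℂ := (hA.eigenvectorUnitary : Matrix m m ℂ)
  have hUinv : U⁻¹ = star U := inv_eq_left_inv (Unitary.coe_star_mul_self _)
  have hU : IsUnit U := Unitary.isUnit_coe
  have hsmul :
      (τ : ℂ) • A = U * diagonal (fun i => ((τ * hA.eigenvalues i : ℝ) : ℂ)) * U⁻¹ := by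
    conv_lhs => rw [hA.spectral_theorem, Unitary.conjStarAlgAut_apply]
    rw [hUinv, ← Matrix.smul_mul, ← Matrix.mul_smul, ← diagonal_smul]
    congr 3
    ext i
    simp
  rw [hsmul, exp_conj U _ hU, exp_diagonal, hUinv]
  congr 3
  funext i
  rw [Pi.coe_exp, ← Complex.exp_eq_exp_ℂ, Complex.ofReal_exp]

noncomputable def spectralWeight (ρ : Matrix m m ℂ) (i : m) : ℝ :=
  (star ⇑(hA.eigenvectorBasis i) ⬝ᵥ (ρ *ᵥ ⇑(hA.eigenvectorBasis i))).re

theorem spectralWeight_nonneg {ρ : Matrix m m ℂ} (hρ : ρ.PosSemidef) (i : m) :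
    0 ≤ hA.spectralWeight ρ i :=
  (Complex.le_def.mp (hρ.dotProduct_mulVec_nonneg _)).1

theorem re_trace_sum_smul_vecMulVec_mul (c : m → ℝ) (ρ : Matrix m m ℂ) :
    (trace ((∑ i, (c i : ℂ) • vecMulVec (hA.eigenvectorBasis i) (star ⇑(hA.eigenvectorBasis i))) *
        ρ)).re =
      ∑ i, c i * hA.spectralWeight ρ i := by
  simp only [Finset.sum_mul, trace_sum, Complex.re_sum, smul_mul, trace_smul, trace_vecMulVec_mul_s9,
    smul_eq_mul, Complex.re_ofReal_mul, spectralWeight]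

theorem re_trace_exp_real_smul_mul (τ : ℝ) (ρ : Matrix m m ℂ) :
    (trace (NormedSpace.exp ((τ : ℂ) • A) * ρ)).re =
      ∑ i, Real.exp (τ * hA.eigenvalues i) * hA.spectralWeight ρ i := by
  rw [hA.exp_real_smul, eigenvectorUnitary_mul_diagonal_mul_star,
    re_trace_sum_smul_vecMulVec_mul]

end IsHermitian
end Matrix

theorem ite_one_zero_le_exp_mul_sub {x t τ : ℝ} (hτ : 0 ≤ τ) :
    (if x ≤ t then 1 else 0 : ℝ) ≤ Real.exp (τ * (t - x)) := by
  split_ifs with h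
  · exact Real.one_le_exp (mul_nonneg hτ (sub_nonneg.mpr h))
  · exact (Real.exp_pos _).le

section specProj

variable {n : ℕ} {A : Matrix (Fin n) (Fin n) ℂ} (hA : A.IsHermitian)

theorem specProj_eq_sum_smul (P : ℝ → Prop) [DecidablePred P] :
    specProj hA P = ∑ i, ((if P (hA.eigenvalues i) then 1 else 0 : ℝ) : ℂ) •
      vecMulVec (hA.eigenvectorBasis i) (star ⇑(hA.eigenvectorBasis i)) := by
  refine Finset.sum_congr rfl fun i _ => ?_
  split_ifs <;> simp [Pi.star_def]

theorem re_trace_specProj_mul (P : ℝ → Prop) [DecidablePred P] (ρ : Matrix (Fin n) (Fin n) ℂ) :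
    (trace (specProj hA P * ρ)).re =
      ∑ i, (if P (hA.eigenvalues i) then 1 else 0) * hA.spectralWeight ρ i := by
  rw [specProj_eq_sum_smul hA, hA.re_trace_sum_smul_vecMulVec_mul]

theorem re_trace_specProj_mul_le {ρ : Matrix (Fin n) (Fin n) ℂ} (hρ : ρ.PosSemidef) (x : ℝ)
    {τ : ℝ} (hτ : 0 ≤ τ) :
    (trace (specProj hA (fun t => x ≤ t) * ρ)).re ≤
      Real.exp (-(τ * x)) * (trace (NormedSpace.exp ((τ : ℂ) • A) * ρ)).re := by
  rw [re_trace_specProj_mul hA, hA.re_trace_exp_real_smul_mul, Finset.mul_sum]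
  refine Finset.sum_le_sum fun i _ => ?_
  rw [← mul_assoc, ← Real.exp_add,
    show -(τ * x) + τ * hA.eigenvalues i = τ * (hA.eigenvalues i - x) by ring]
  exact mul_le_mul_of_nonneg_right (ite_one_zero_le_exp_mul_sub hτ) (hA.spectralWeight_nonneg hρ i)

end specProj

/-- The value of `exp (-τ x) (1 - λ τ) ^ (-σ / λ)` at its minimiser `τ = (x - σ) / (λ x)`. -/
theorem exp_chernoff_exponent_at_optimum {lam sigma x : ℝ} (hlam : lam ≠ 0) (hsigma : 0 < sigma)
    (hx : 0 < x) :
    Real.exp (-((x - sigma) / (lam * x) * x)) *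
        Real.exp (-(sigma / lam) * Real.log (1 - lam * ((x - sigma) / (lam * x)))) =
      (x / sigma) ^ (sigma / lam) * Real.exp (-(x - sigma) / lam) := by
  have hbase : 1 - lam * ((x - sigma) / (lam * x)) = (x / sigma)⁻¹ := by
    field_simp
    ring
  rw [hbase, Real.log_inv, Real.rpow_def_of_pos (div_pos hx hsigma), ← Real.exp_add,
    ← Real.exp_add]
  congr 1
  field_simp
  ring

theorem tail_from_localized_mgf_general {n : ℕ} (ρ A : Matrix (Fin n) (Fin n) ℂ)
    (hρ : ρ.PosSemidef) (hA : A.IsHermitian)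
    (lam sigma : ℝ) (hlam : 0 < lam) (hsigma : 0 < sigma)
    (hmgf : ∀ τ : ℝ, 0 ≤ τ → τ < 1 / lam →
      Real.log (Matrix.trace (NormedSpace.exp ((τ : ℂ) • A) * ρ)).re ≤
        -(sigma / lam) * Real.log (1 - lam * τ)) :
    ∀ x : ℝ, sigma ≤ x →
      (Matrix.trace (specProj hA (fun t => x ≤ t) * ρ)).re ≤
        (x / sigma) ^ (sigma / lam) * Real.exp (-(x - sigma) / lam) := by
  intro x hx
  have hx0 : 0 < x := hsigma.trans_le hx
  set τ := (x - sigma) / (lam * x)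
  have hτ0 : 0 ≤ τ := div_nonneg (sub_nonneg.mpr hx) (by positivity)
  have hτ1 : τ < 1 / lam := by
    rw [div_lt_div_iff₀ (by positivity) hlam]
    nlinarith
  calc (trace (specProj hA (fun t => x ≤ t) * ρ)).re
      ≤ Real.exp (-(τ * x)) * (trace (NormedSpace.exp ((τ : ℂ) • A) * ρ)).re :=
        re_trace_specProj_mul_le hA hρ x hτ0
    _ ≤ Real.exp (-(τ * x)) * Real.exp (-(sigma / lam) * Real.log (1 - lam * τ)) := by
        gcongr
        -- `y ≤ exp (log y)` holds for every real `y`, so the trace need not be positive.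
        exact (Real.le_exp_log _).trans (Real.exp_le_exp.mpr (hmgf τ hτ0 hτ1))
    _ = (x / sigma) ^ (sigma / lam) * Real.exp (-(x - sigma) / lam) :=
        exp_chernoff_exponent_at_optimum hlam.ne' hsigma hx0

theorem tail_from_localized_mgf {n : ℕ} (ρ A : Matrix (Fin n) (Fin n) ℂ)
    (hρ : ρ.PosSemidef) (hρtr : ρ.trace = 1) (hA : A.IsHermitian)
    (lam sigma : ℝ) (hlam : 0 < lam) (hsigma : 0 < sigma)
    (hmgf : ∀ τ : ℝ, 0 ≤ τ → τ < 1 / lam →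
      Real.log (Matrix.trace (NormedSpace.exp ((τ : ℂ) • A) * ρ)).re ≤
        -(sigma / lam) * Real.log (1 - lam * τ)) :
    ∀ x : ℝ, sigma ≤ x →
      (Matrix.trace (specProj hA (fun t => x ≤ t) * ρ)).re ≤
        (x / sigma) ^ (sigma / lam) * Real.exp (-(x - sigma) / lam) :=
  tail_from_localized_mgf_general ρ A hρ hA lam sigma hlam hsigma hmgf
end

section
/- For all integers n̄ ≥ 1 and 1 ≤ m ≤ n̄: Σ_{j=0}^{m−1} binom(n̄ − m + j − 1, j) · binom(n̄, m − j) ≤ 2^m · binom(n̄, m). -/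
/-! Choosing `m - j` elements of an `n`-set and then `j` more among the rest is the same as
choosing `m` elements and marking `j` of them, so each summand is at most `C(n, m) C(m, j)`;
summing `C(m, j)` over `j < m` gives at most `2 ^ m`. -/

open Finset

namespace Nat

theorem choose_sub_mul_choose_eq (n : ℕ) {m j : ℕ} (hjm : j ≤ m) :
    n.choose (m - j) * (n - (m - j)).choose j = n.choose m * m.choose j := by
  have h := choose_mul (n := n) (Nat.sub_le m j)
  rw [Nat.sub_sub_self hjm, choose_symm hjm] at h
  exact h.symm

theorem sum_range_choose_le_two_pow (m : ℕ) : ∑ j ∈ range m, m.choose j ≤ 2 ^ m :=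
  calc ∑ j ∈ range m, m.choose j
      ≤ ∑ j ∈ range (m + 1), m.choose j := sum_le_sum_of_subset (range_subset_range.mpr m.le_succ)
    _ = 2 ^ m := sum_range_choose m

theorem choose_sub_add_sub_one_mul_choose_le {n m j : ℕ} (hjm : j ≤ m) (hmn : m ≤ n) :
    (n - m + j - 1).choose j * n.choose (m - j) ≤ n.choose m * m.choose j :=
  calc (n - m + j - 1).choose j * n.choose (m - j)
      ≤ (n - (m - j)).choose j * n.choose (m - j) :=
        Nat.mul_le_mul_right _ (choose_le_choose j (by omega))
    _ = n.choose m * m.choose j := by rw [mul_comm, choose_sub_mul_choose_eq n hjm]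

end Nat

theorem binomial_sum_bound_general (nbar m : ℕ) (hmn : m ≤ nbar) :
    ∑ j ∈ Finset.range m, (nbar - m + j - 1).choose j * nbar.choose (m - j) ≤
      2 ^ m * nbar.choose m :=
  calc ∑ j ∈ range m, (nbar - m + j - 1).choose j * nbar.choose (m - j)
      ≤ ∑ j ∈ range m, nbar.choose m * m.choose j := sum_le_sum fun _ hj =>
        Nat.choose_sub_add_sub_one_mul_choose_le (mem_range.mp hj).le hmn
    _ = nbar.choose m * ∑ j ∈ range m, m.choose j := (mul_sum ..).symm
    _ ≤ nbar.choose m * 2 ^ m := Nat.mul_le_mul_left _ (Nat.sum_range_choose_le_two_pow m)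
    _ = 2 ^ m * nbar.choose m := mul_comm ..

theorem binomial_sum_bound (nbar m : ℕ) (hm : 1 ≤ m) (hmn : m ≤ nbar) :
    ∑ j ∈ Finset.range m, (nbar - m + j - 1).choose j * nbar.choose (m - j) ≤
      2 ^ m * nbar.choose m :=
  binomial_sum_bound_general nbar m hmn
end
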